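/- arXiv:2301.09364 — 3 statements merged into one kernel-verified Lean document; each statement's English description precedes it below -/
import Mathlib

section
/- Let n ≥ 2 and let (c_{i,j})_{0≤i,j≤n} be real numbers satisfying: c_{i,j} = -c_{j,i} for all i,j; c_{i,j} = 0 whenever i + j > n + 1; c_{i+1,j} + c_{i,j+1} = c_{i,j} for all 0 ≤ i,j ≤ n (with out-of-range coefficients zero); c_{i,j} = 0 whenever min(i,j) ≥ 3; and, if n ≥ 3, c_{n-1,2} = c_{2,n-1} = 0. Then, setting β := c_{n,1}, one has c_{i,0} = -c_{0,i} = (n-i+1)β for 2 ≤ i ≤ n, c_{1,0} = -c_{0,1} = (n-1)β, c_{i,1} = -c_{1,i} = β for 2 ≤ i ≤ n, and all other c_{i,j} vanish. -/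
/-- The antisymmetric coefficient system determining (up to scale) the lowest
weight vector of the trace-free module `A₂^tf` for vector ODEs of order `n+1 ≥ 3`. -/
theorem stmt_1 (n : ℕ) (hn : 2 ≤ n) (c : ℕ → ℕ → ℝ)
    (hanti : ∀ i j : ℕ, c i j = - c j i)
    (hout : ∀ i j : ℕ, n < i ∨ n < j → c i j = 0)
    (hvan : ∀ i j : ℕ, n + 1 < i + j → c i j = 0)
    (hXA : ∀ i j : ℕ, i ≤ n → j ≤ n → c (i+1) j + c i (j+1) = c i j)
    (hSR : ∀ i j : ℕ, 3 ≤ i → 3 ≤ j → c i j = 0)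
    (hDM : 3 ≤ n → c (n-1) 2 = 0 ∧ c 2 (n-1) = 0) :
    (∀ i : ℕ, 2 ≤ i → i ≤ n →
        c i 0 = ((n : ℝ) - i + 1) * c n 1 ∧ c 0 i = -(((n : ℝ) - i + 1) * c n 1)) ∧
    c 1 0 = ((n : ℝ) - 1) * c n 1 ∧ c 0 1 = -(((n : ℝ) - 1) * c n 1) ∧
    (∀ i : ℕ, 2 ≤ i → i ≤ n → c i 1 = c n 1 ∧ c 1 i = -(c n 1)) ∧
    c 0 0 = 0 ∧ c 1 1 = 0 ∧
    (∀ i j : ℕ, 2 ≤ i → 2 ≤ j → c i j = 0) := by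
  -- c 2 j = 0 for j ≥ 3
  have key : ∀ k j : ℕ, 3 ≤ j → n - j = k → c 2 j = 0 := by
    intro k
    induction k with
    | zero =>
      intro j hj hk
      exact hvan 2 j (by omega)
    | succ m ih =>
      intro j hj hk
      have hrec := hXA 2 j (by omega) (by omega)
      have h3 : c 3 j = 0 := hSR 3 j le_rfl hj
      have hnext : c 2 (j+1) = 0 := ih (j+1) (by omega) (by omega)
      linarith
  have hz : ∀ i j : ℕ, 2 ≤ i → 2 ≤ j → c i j = 0 := by
    intro i j hi hj
    rcases Nat.lt_or_ge i 3 with h3i | h3i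
    · have hi2 : i = 2 := by omega
      subst hi2
      rcases Nat.lt_or_ge j 3 with h3j | h3j
      · have hj2 : j = 2 := by omega
        subst hj2
        have := hanti 2 2; linarith
      · exact key (n - j) j h3j rfl
    · rcases Nat.lt_or_ge j 3 with h3j | h3j
      · have hj2 : j = 2 := by omega
        subst hj2
        have h := key (n - i) i h3i rfl
        rw [hanti]; rw [h]; ring
      · exact hSR i j h3i h3j
  -- c i 1 = c n 1 for 2 ≤ i ≤ n
  have hc1 : ∀ k i : ℕ, 2 ≤ i → i ≤ n → n - i = k → c i 1 = c n 1 := by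
    intro k
    induction k with
    | zero =>
      intro i hi hin hk
      have : i = n := by omega
      rw [this]
    | succ m ih =>
      intro i hi hin hk
      have hrec := hXA i 1 (by omega) (by omega)
      have h2 : c i 2 = 0 := hz i 2 hi le_rfl
      have := ih (i+1) (by omega) (by omega) (by omega)
      linarith
  -- c n 0 = c n 1
  have hn0 : c n 0 = c n 1 := by
    have hrec := hXA n 0 le_rfl (by omega)
    have h := hout (n+1) 0 (Or.inl (by omega))
    linarith
  -- c i 0 = (n - i + 1) * c n 1 for 2 ≤ i ≤ n
  have hc0 : ∀ k i : ℕ, 2 ≤ i → i ≤ n → n - i = k → c i 0 = ((n : ℝ) - i + 1) * c n 1 := by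
    intro k
    induction k with
    | zero =>
      intro i hi hin hk
      have hie : i = n := by omega
      subst hie
      rw [hn0]; ring
    | succ m ih =>
      intro i hi hin hk
      have hrec := hXA i 0 (by omega) (by omega)
      have h1 : c i 1 = c n 1 := hc1 (n - i) i hi hin rfl
      have h2 := ih (i+1) (by omega) (by omega) (by omega)
      push_cast at h2 ⊢
      linarith
  have h11 : c 1 1 = 0 := by have := hanti 1 1; linarith
  have h00 : c 0 0 = 0 := by have := hanti 0 0; linarith
  have h10 : c 1 0 = ((n : ℝ) - 1) * c n 1 := by
    have hrec := hXA 1 0 (by omega) (by omega)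
    have h2 : c 2 0 = ((n : ℝ) - 2 + 1) * c n 1 := hc0 (n - 2) 2 le_rfl hn rfl
    push_cast at h2
    linarith
  refine ⟨?_, h10, ?_, ?_, h00, h11, hz⟩
  · intro i hi hin
    have h := hc0 (n - i) i hi hin rfl
    refine ⟨h, ?_⟩
    rw [hanti 0 i, h]
  · rw [hanti 0 1, h10]
  · intro i hi hin
    have h := hc1 (n - i) i hi hin rfl
    exact ⟨h, by rw [hanti 1 i, h]⟩
end

section
/- Let n ≥ 3 and m ≥ 2 be integers, and let (c_{i,j})_{0≤i,j≤n} be given by the explicit formulas: c_{i,0} = (n-i+1)β for 3 ≤ i ≤ n, c_{2,0} = α + (n-1)β, c_{1,0} = nα/2 + (n-1)β, c_{0,1} = -c_{1,0}, c_{0,i} = (i-n-1)(β + iα/2) for 2 ≤ i ≤ n, c_{1,i} = (n/2 - i)α + (δ_i^1 - 1)β for 1 ≤ i ≤ n, c_{i,1} = β + δ_i^2 α for 2 ≤ i ≤ n, c_{2,i} = (1 - δ_i^n)α for 2 ≤ i ≤ n, c_{i,2} = 0 for 3 ≤ i ≤ n, all other coefficients zero, where α, β are real parameters. If these coefficients satisfy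 the identity 0 = Σ_{k=0}^{n-1} ((n-k)(k+1)/(n(n-1)))(c_{k,2} - m·c_{2,k}) + Σ_{k=0}^{n} ((2k-n)/n)(m·c_{1,k} - c_{k,1}) + Σ_{k=1}^{n} (m·c_{0,k} - c_{k,0}), then (m·n·(n+1) + 6)·α + 6·(n-1)·(m+1)·β = 0; in particular α = -6(n-1)(m+1)β / (m·n(n+1)+6). -/
lemma sum_poly_Ico (a b c : ℝ) : ∀ u : ℕ, 3 ≤ u →
    ∑ k ∈ Finset.Ico 3 u, (a + b * (k : ℝ) + c * (k : ℝ) ^ 2)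
      = a * ((u : ℝ) - 3) + b * ((u : ℝ) * ((u : ℝ) - 1) / 2 - 3)
        + c * ((u : ℝ) * ((u : ℝ) - 1) * (2 * (u : ℝ) - 1) / 6 - 5) := by
  intro u hu
  induction u, hu using Nat.le_induction with
  | base => norm_num
  | succ p hp ih =>
      rw [Finset.sum_Ico_succ_top (by omega), ih]
      push_cast
      ring

set_option maxHeartbeats 1000000 in
/-- Coclosedness computation fixing the ratio α/β for the lowest weight vector
of `A₂^tr`: the stated sum identity implies `(mn(n+1)+6)α + 6(n-1)(m+1)β = 0`. -/
theorem stmt_2 (n m : ℕ) (hn : 3 ≤ n) (hm : 2 ≤ m) (α β : ℝ) (c : ℕ → ℕ → ℝ)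
    (h1 : ∀ i : ℕ, 3 ≤ i → i ≤ n → c i 0 = ((n : ℝ) - i + 1) * β)
    (h2 : c 2 0 = α + ((n : ℝ) - 1) * β)
    (h3 : c 1 0 = (n : ℝ) * α / 2 + ((n : ℝ) - 1) * β)
    (h4 : c 0 1 = - c 1 0)
    (h5 : ∀ i : ℕ, 2 ≤ i → i ≤ n → c 0 i = ((i : ℝ) - (n : ℝ) - 1) * (β + (i : ℝ) * α / 2))
    (h6 : ∀ i : ℕ, 1 ≤ i → i ≤ n →
        c 1 i = ((n : ℝ) / 2 - (i : ℝ)) * α + ((if i = 1 then (1 : ℝ) else 0) - 1) * β)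
    (h7 : ∀ i : ℕ, 2 ≤ i → i ≤ n → c i 1 = β + (if i = 2 then α else 0))
    (h8 : ∀ i : ℕ, 2 ≤ i → i ≤ n → c 2 i = (1 - (if i = n then (1 : ℝ) else 0)) * α)
    (h9 : ∀ i : ℕ, 3 ≤ i → i ≤ n → c i 2 = 0)
    (h0 : c 0 0 = 0)
    (hz : ∀ i j : ℕ, 3 ≤ i → 3 ≤ j → c i j = 0)
    (hout : ∀ i j : ℕ, n < i ∨ n < j → c i j = 0)
    (hsum : 0 =
      (∑ k ∈ Finset.range n,
        (((n : ℝ) - k) * ((k : ℝ) + 1) / ((n : ℝ) * ((n : ℝ) - 1))) * (c k 2 - (m : ℝ) * c 2 k))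
      + (∑ k ∈ Finset.range (n + 1),
        ((2 * (k : ℝ) - (n : ℝ)) / (n : ℝ)) * ((m : ℝ) * c 1 k - c k 1))
      + (∑ k ∈ Finset.Icc 1 n, ((m : ℝ) * c 0 k - c k 0))) :
    ((m : ℝ) * (n : ℝ) * ((n : ℝ) + 1) + 6) * α + 6 * ((n : ℝ) - 1) * ((m : ℝ) + 1) * β = 0 ∧
    α = -6 * ((n : ℝ) - 1) * ((m : ℝ) + 1) * β / ((m : ℝ) * (n : ℝ) * ((n : ℝ) + 1) + 6) := by
  have hn3 : (3 : ℝ) ≤ (n : ℝ) := by exact_mod_cast hn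
  have hm2 : (2 : ℝ) ≤ (m : ℝ) := by exact_mod_cast hm
  have hN0 : (n : ℝ) ≠ 0 := by positivity
  have hN1 : (n : ℝ) - 1 ≠ 0 := by intro h; linarith
  set Ω : ℝ := ((m : ℝ) * (n : ℝ) * ((n : ℝ) + 1) + 6) * α
      + 6 * ((n : ℝ) - 1) * ((m : ℝ) + 1) * β with hΩdef
  -- Sum 1
  have e1 : (∑ k ∈ Finset.range n,
        (((n : ℝ) - k) * ((k : ℝ) + 1) / ((n : ℝ) * ((n : ℝ) - 1))) * (c k 2 - (m : ℝ) * c 2 k))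
      = -(((n : ℝ) + 2) / (6 * (n : ℝ) * ((n : ℝ) - 1))) * Ω := by
    rw [Finset.range_eq_Ico,
      ← Finset.sum_Ico_consecutive _ (Nat.zero_le 3) hn, ← Finset.range_eq_Ico]
    have tail : (∑ k ∈ Finset.Ico 3 n,
        (((n : ℝ) - k) * ((k : ℝ) + 1) / ((n : ℝ) * ((n : ℝ) - 1))) * (c k 2 - (m : ℝ) * c 2 k))
        = ∑ k ∈ Finset.Ico 3 n,
          ((-((m : ℝ) * α * (n : ℝ)) / ((n : ℝ) * ((n : ℝ) - 1)))
            + (-((m : ℝ) * α * ((n : ℝ) - 1)) / ((n : ℝ) * ((n : ℝ) - 1))) * (k : ℝ)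
            + (((m : ℝ) * α) / ((n : ℝ) * ((n : ℝ) - 1))) * (k : ℝ) ^ 2) := by
      refine Finset.sum_congr rfl fun k hk => ?_
      rw [Finset.mem_Ico] at hk
      rw [h9 k hk.1 (by omega), h8 k (by omega) (by omega), if_neg (by omega : ¬ k = n)]
      field_simp
      ring
    rw [tail, sum_poly_Ico _ _ _ n hn]
    rw [Finset.sum_range_succ, Finset.sum_range_succ, Finset.sum_range_succ,
      Finset.sum_range_zero]
    rw [h5 2 (by norm_num) (by omega), h2, h6 2 (by norm_num) (by omega),
      h7 2 (by norm_num) (by omega), h8 2 (by norm_num) (by omega),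
      if_neg (by norm_num : ¬ (2 : ℕ) = 1), if_pos rfl, if_neg (by omega : ¬ (2 : ℕ) = n)]
    push_cast
    field_simp
    ring
  -- Sum 2
  have e2 : (∑ k ∈ Finset.range (n + 1),
        ((2 * (k : ℝ) - (n : ℝ)) / (n : ℝ)) * ((m : ℝ) * c 1 k - c k 1))
      = -(((n : ℝ) + 2) / (6 * (n : ℝ))) * Ω := by
    rw [Finset.range_eq_Ico,
      ← Finset.sum_Ico_consecutive _ (Nat.zero_le 3) (by omega : 3 ≤ n + 1),
      ← Finset.range_eq_Ico]
    have tail : (∑ k ∈ Finset.Ico 3 (n + 1),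
        ((2 * (k : ℝ) - (n : ℝ)) / (n : ℝ)) * ((m : ℝ) * c 1 k - c k 1))
        = ∑ k ∈ Finset.Ico 3 (n + 1),
          ((-((n : ℝ) * ((m : ℝ) * (n : ℝ) * α / 2 - ((m : ℝ) + 1) * β)) / (n : ℝ))
            + ((2 * ((m : ℝ) * (n : ℝ) * α / 2 - ((m : ℝ) + 1) * β)
                + (n : ℝ) * (m : ℝ) * α) / (n : ℝ)) * (k : ℝ)
            + (-(2 * (m : ℝ) * α) / (n : ℝ)) * (k : ℝ) ^ 2) := by
      refine Finset.sum_congr rfl fun k hk => ?_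
      rw [Finset.mem_Ico] at hk
      rw [h6 k (by omega) (by omega), h7 k (by omega) (by omega),
        if_neg (by omega : ¬ k = 1), if_neg (by omega : ¬ k = 2)]
      field_simp
      ring
    rw [tail, sum_poly_Ico _ _ _ (n + 1) (by omega)]
    rw [Finset.sum_range_succ, Finset.sum_range_succ, Finset.sum_range_succ,
      Finset.sum_range_zero]
    rw [h4, h3, h6 1 (by norm_num) (by omega), h6 2 (by norm_num) (by omega),
      h7 2 (by norm_num) (by omega),
      if_pos rfl, if_neg (by norm_num : ¬ (2 : ℕ) = 1), if_pos rfl]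
    push_cast
    field_simp
    ring
  -- Sum 3
  have e3 : (∑ k ∈ Finset.Icc 1 n, ((m : ℝ) * c 0 k - c k 0))
      = -(((n : ℝ) + 2) / 12) * Ω := by
    have hIcc : Finset.Icc 1 n = Finset.Ico 1 (n + 1) := by
      rw [Finset.Ico_add_one_right_eq_Icc]
    rw [hIcc, ← Finset.sum_Ico_consecutive _ (by omega : 1 ≤ 3) (by omega : 3 ≤ n + 1)]
    have head : (∑ k ∈ Finset.Ico 1 3, ((m : ℝ) * c 0 k - c k 0))
        = ((m : ℝ) * c 0 1 - c 1 0) + ((m : ℝ) * c 0 2 - c 2 0) := by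
      rw [show Finset.Ico 1 3 = {1, 2} from by decide]
      rw [Finset.sum_insert (by decide), Finset.sum_singleton]
    have tail : (∑ k ∈ Finset.Ico 3 (n + 1), ((m : ℝ) * c 0 k - c k 0))
        = ∑ k ∈ Finset.Ico 3 (n + 1),
          ((-(((m : ℝ) + 1) * ((n : ℝ) + 1) * β))
            + (((m : ℝ) + 1) * β - (m : ℝ) * ((n : ℝ) + 1) * α / 2) * (k : ℝ)
            + ((m : ℝ) * α / 2) * (k : ℝ) ^ 2) := by
      refine Finset.sum_congr rfl fun k hk => ?_
      rw [Finset.mem_Ico] at hk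
      rw [h5 k (by omega) (by omega), h1 k (by omega) (by omega)]
      ring
    rw [head, tail, sum_poly_Ico _ _ _ (n + 1) (by omega)]
    rw [h4, h3, h5 2 (by norm_num) (by omega), h2]
    push_cast
    ring
  rw [e1, e2, e3] at hsum
  have key : (0 : ℝ) = -((((n : ℝ) + 1) * ((n : ℝ) + 2)) / (12 * ((n : ℝ) - 1))) * Ω := by
    rw [hsum]
    field_simp
    ring
  have hcpos : (0 : ℝ) < (((n : ℝ) + 1) * ((n : ℝ) + 2)) / (12 * ((n : ℝ) - 1)) := by
    apply div_pos
    · have : (0:ℝ) < (n:ℝ) + 1 := by linarith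
      have : (0:ℝ) < (n:ℝ) + 2 := by linarith
      positivity
    · linarith
  have hΩ : Ω = 0 := by
    rcases mul_eq_zero.mp key.symm with h | h
    · exact absurd (neg_eq_zero.mp h) (ne_of_gt hcpos)
    · exact h
  have hD : (0 : ℝ) < (m : ℝ) * (n : ℝ) * ((n : ℝ) + 1) + 6 := by
    have hm0 : (0:ℝ) ≤ (m:ℝ) := by positivity
    have hn0 : (0:ℝ) ≤ (n:ℝ) := by positivity
    have : (0:ℝ) ≤ (m:ℝ) * (n:ℝ) * ((n:ℝ)+1) := by positivity
    linarith
  refine ⟨hΩ, ?_⟩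
  rw [eq_div_iff (ne_of_gt hD)]
  rw [hΩdef] at hΩ
  linarith
end

section
/- Fix n ≥ 3 and m ≥ 2 and real parameters α, β related by (mn(n+1)+6)α + 6(n-1)(m+1)β = 0. Then the three sums S₁ := Σ_{k=0}^{n-1} ((n-k)(k+1)/(n(n-1)))(c_{k,2} - m·c_{2,k}), S₂ := Σ_{k=0}^{n} ((2k-n)/n)(m·c_{1,k} - c_{k,1}), S₃ := Σ_{k=1}^{n} (m·c_{0,k} - c_{k,0}), where (c_{i,j}) is the explicit A₂^tr coefficient family in terms of α and β, evaluate to S₁ = -((n+2)/(6n(n-1)))·Ω, S₂ = -((n+2)/(6n))·Ω, S₃ = -((n+2)/12)·Ω, with Ω := (mn(n+1)+6)α + 6(n-1)(m+1)β; hence S₁ + S₂ + S₃ = -((n+2)(n+1)/(12(n-1)))·Ω. -/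
private lemma sum_id' (N : ℕ) : ∑ k ∈ Finset.range N, (k : ℝ) = N * (N - 1) / 2 := by
  induction N with
  | zero => simp
  | succ n ih => rw [Finset.sum_range_succ, ih]; push_cast; ring

private lemma sum_sq' (N : ℕ) :
    ∑ k ∈ Finset.range N, (k : ℝ) ^ 2 = N * (N - 1) * (2 * N - 1) / 6 := by
  induction N with
  | zero => simp
  | succ n ih => rw [Finset.sum_range_succ, ih]; push_cast; ring

private lemma sum_poly (N : ℕ) (a b c : ℝ) :
    ∑ k ∈ Finset.range N, (a * (k : ℝ) ^ 2 + b * (k : ℝ) + c)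
      = a * ((N : ℝ) * (N - 1) * (2 * N - 1) / 6) + b * ((N : ℝ) * (N - 1) / 2) + c * N := by
  rw [Finset.sum_add_distrib, Finset.sum_add_distrib, ← Finset.mul_sum, ← Finset.mul_sum,
    sum_id', sum_sq', Finset.sum_const, nsmul_eq_mul, Finset.card_range]
  ring

/-- Detailed evaluation of the three coclosedness sums for the explicit
`A₂^tr` coefficient family, in terms of `Ω = (mn(n+1)+6)α + 6(n-1)(m+1)β`. -/
theorem stmt_15 (n m : ℕ) (hn : 3 ≤ n) (hm : 2 ≤ m) (α β Ω : ℝ) (c : ℕ → ℕ → ℝ)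
    (hΩdef : Ω = ((m : ℝ) * (n : ℝ) * ((n : ℝ) + 1) + 6) * α
        + 6 * ((n : ℝ) - 1) * ((m : ℝ) + 1) * β)
    (hrel : Ω = 0)
    (h1 : ∀ i : ℕ, 3 ≤ i → i ≤ n → c i 0 = ((n : ℝ) - i + 1) * β)
    (h2 : c 2 0 = α + ((n : ℝ) - 1) * β)
    (h3 : c 1 0 = (n : ℝ) * α / 2 + ((n : ℝ) - 1) * β)
    (h4 : c 0 1 = - c 1 0)
    (h5 : ∀ i : ℕ, 2 ≤ i → i ≤ n → c 0 i = ((i : ℝ) - (n : ℝ) - 1) * (β + (i : ℝ) * α / 2))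
    (h6 : ∀ i : ℕ, 1 ≤ i → i ≤ n →
        c 1 i = ((n : ℝ) / 2 - (i : ℝ)) * α + ((if i = 1 then (1 : ℝ) else 0) - 1) * β)
    (h7 : ∀ i : ℕ, 2 ≤ i → i ≤ n → c i 1 = β + (if i = 2 then α else 0))
    (h8 : ∀ i : ℕ, 2 ≤ i → i ≤ n → c 2 i = (1 - (if i = n then (1 : ℝ) else 0)) * α)
    (h9 : ∀ i : ℕ, 3 ≤ i → i ≤ n → c i 2 = 0)
    (h0 : c 0 0 = 0)
    (hz : ∀ i j : ℕ, 3 ≤ i → 3 ≤ j → c i j = 0)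
    (hout : ∀ i j : ℕ, n < i ∨ n < j → c i j = 0) :
    (∑ k ∈ Finset.range n,
        (((n : ℝ) - k) * ((k : ℝ) + 1) / ((n : ℝ) * ((n : ℝ) - 1))) * (c k 2 - (m : ℝ) * c 2 k))
      = -(((n : ℝ) + 2) / (6 * (n : ℝ) * ((n : ℝ) - 1))) * Ω ∧
    (∑ k ∈ Finset.range (n + 1),
        ((2 * (k : ℝ) - (n : ℝ)) / (n : ℝ)) * ((m : ℝ) * c 1 k - c k 1))
      = -(((n : ℝ) + 2) / (6 * (n : ℝ))) * Ω ∧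
    (∑ k ∈ Finset.Icc 1 n, ((m : ℝ) * c 0 k - c k 0))
      = -(((n : ℝ) + 2) / 12) * Ω ∧
    (∑ k ∈ Finset.range n,
        (((n : ℝ) - k) * ((k : ℝ) + 1) / ((n : ℝ) * ((n : ℝ) - 1))) * (c k 2 - (m : ℝ) * c 2 k))
      + (∑ k ∈ Finset.range (n + 1),
        ((2 * (k : ℝ) - (n : ℝ)) / (n : ℝ)) * ((m : ℝ) * c 1 k - c k 1))
      + (∑ k ∈ Finset.Icc 1 n, ((m : ℝ) * c 0 k - c k 0))
      = -(((n : ℝ) + 2) * ((n : ℝ) + 1) / (12 * ((n : ℝ) - 1))) * Ω := by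
  have hnR : (3 : ℝ) ≤ (n : ℝ) := by exact_mod_cast hn
  have hn0 : (n : ℝ) ≠ 0 := by linarith
  have hn1 : (n : ℝ) - 1 ≠ 0 := by linarith
  have h2n : 2 ≤ n := by omega
  have hcast3 : ((n - 3 : ℕ) : ℝ) = (n : ℝ) - 3 := by
    push_cast [Nat.cast_sub hn]; ring
  have hcast2 : ((n + 1 - 3 : ℕ) : ℝ) = (n : ℝ) - 2 := by
    have : n + 1 - 3 = n - 2 := by omega
    rw [this]; push_cast [Nat.cast_sub h2n]; ring
  -- S1
  have hS1 : (∑ k ∈ Finset.range n,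
        (((n : ℝ) - k) * ((k : ℝ) + 1) / ((n : ℝ) * ((n : ℝ) - 1))) * (c k 2 - (m : ℝ) * c 2 k))
      = -(((n : ℝ) + 2) / (6 * (n : ℝ) * ((n : ℝ) - 1))) * Ω := by
    rw [Finset.range_eq_Ico, ← Finset.sum_Ico_consecutive _ (Nat.zero_le 3) hn,
      ← Finset.range_eq_Ico, Finset.sum_range_succ, Finset.sum_range_succ,
      Finset.sum_range_one, Finset.sum_Ico_eq_sum_range]
    have htail : ∀ k ∈ Finset.range (n - 3),
        (((n : ℝ) - ((3 + k : ℕ) : ℝ)) * (((3 + k : ℕ) : ℝ) + 1) / ((n : ℝ) * ((n : ℝ) - 1)))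
            * (c (3 + k) 2 - (m : ℝ) * c 2 (3 + k))
          = ((m : ℝ) * α / ((n : ℝ) * ((n : ℝ) - 1))) * (k : ℝ) ^ 2
            + (-(((n : ℝ) - 7) * (m : ℝ) * α) / ((n : ℝ) * ((n : ℝ) - 1))) * (k : ℝ)
            + (-((4 * (n : ℝ) - 12) * (m : ℝ) * α) / ((n : ℝ) * ((n : ℝ) - 1))) := by
      intro k hk
      have hk' : k < n - 3 := Finset.mem_range.mp hk
      rw [h9 (3 + k) (by omega) (by omega), h8 (3 + k) (by omega) (by omega),
        if_neg (show ¬(3 + k = n) by omega)]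
      push_cast; ring
    rw [Finset.sum_congr rfl htail, sum_poly, hcast3,
      h5 2 le_rfl h2n, h2, h6 2 (by omega) h2n, h7 2 le_rfl h2n, h8 2 le_rfl h2n,
      if_neg (show ¬(2 = n) by omega), if_neg (show (2 : ℕ) ≠ 1 by decide),
      if_pos rfl, hΩdef]
    push_cast
    field_simp
    ring
  -- S2
  have hS2 : (∑ k ∈ Finset.range (n + 1),
        ((2 * (k : ℝ) - (n : ℝ)) / (n : ℝ)) * ((m : ℝ) * c 1 k - c k 1))
      = -(((n : ℝ) + 2) / (6 * (n : ℝ))) * Ω := by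
    rw [Finset.range_eq_Ico, ← Finset.sum_Ico_consecutive _ (Nat.zero_le 3) (by omega : 3 ≤ n + 1),
      ← Finset.range_eq_Ico, Finset.sum_range_succ, Finset.sum_range_succ,
      Finset.sum_range_one, Finset.sum_Ico_eq_sum_range]
    have htail : ∀ k ∈ Finset.range (n + 1 - 3),
        ((2 * ((3 + k : ℕ) : ℝ) - (n : ℝ)) / (n : ℝ)) * ((m : ℝ) * c 1 (3 + k) - c (3 + k) 1)
          = (-2 * (m : ℝ) * α / (n : ℝ)) * (k : ℝ) ^ 2
            + ((-2 * (m : ℝ) * (6 - (n : ℝ)) * α - 2 * ((m : ℝ) + 1) * β) / (n : ℝ)) * (k : ℝ)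
            + ((-(m : ℝ) / 2 * α * (6 - (n : ℝ)) ^ 2 - ((m : ℝ) + 1) * β * (6 - (n : ℝ))) / (n : ℝ)) := by
      intro k hk
      have hk' : k < n + 1 - 3 := Finset.mem_range.mp hk
      rw [h6 (3 + k) (by omega) (by omega), h7 (3 + k) (by omega) (by omega),
        if_neg (show ¬(3 + k = 1) by omega), if_neg (show ¬(3 + k = 2) by omega)]
      push_cast; ring
    rw [Finset.sum_congr rfl htail, sum_poly, hcast2,
      h4, h3, h6 1 le_rfl (by omega), h6 2 (by omega) h2n, h7 2 le_rfl h2n,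
      if_pos rfl, if_neg (show (2 : ℕ) ≠ 1 by decide), if_pos rfl, hΩdef]
    push_cast
    field_simp
    ring
  -- S3
  have hS3 : (∑ k ∈ Finset.Icc 1 n, ((m : ℝ) * c 0 k - c k 0))
      = -(((n : ℝ) + 2) / 12) * Ω := by
    have hhead : ∑ i ∈ Finset.Ico 1 3, ((m : ℝ) * c 0 i - c i 0)
        = ((m : ℝ) * c 0 1 - c 1 0) + ((m : ℝ) * c 0 2 - c 2 0) := by
      rw [show Finset.Ico 1 3 = {1, 2} from rfl]
      rw [Finset.sum_insert (by decide), Finset.sum_singleton]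
    rw [← Finset.Ico_add_one_right_eq_Icc, ← Finset.sum_Ico_consecutive _ (by omega : 1 ≤ 3)
      (by omega : 3 ≤ n + 1), hhead, Finset.sum_Ico_eq_sum_range]
    have htail : ∀ k ∈ Finset.range (n + 1 - 3),
        ((m : ℝ) * c 0 (3 + k) - c (3 + k) 0)
          = ((m : ℝ) * α / 2) * (k : ℝ) ^ 2
            + ((m : ℝ) * β + (m : ℝ) * α / 2 * (5 - (n : ℝ)) + β) * (k : ℝ)
            + ((m : ℝ) * (2 - (n : ℝ)) * β + (m : ℝ) * α / 2 * (6 - 3 * (n : ℝ))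
                - ((n : ℝ) - 2) * β) := by
      intro k hk
      have hk' : k < n + 1 - 3 := Finset.mem_range.mp hk
      rw [h5 (3 + k) (by omega) (by omega), h1 (3 + k) (by omega) (by omega)]
      push_cast; ring
    rw [Finset.sum_congr rfl htail, sum_poly, hcast2,
      h4, h3, h5 2 le_rfl h2n, h2, hΩdef]
    push_cast
    ring
  refine ⟨hS1, hS2, hS3, ?_⟩
  rw [hS1, hS2, hS3]
  field_simp
  ring
end
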